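/- Let (E_n)_{n∈ℕ} be a real sequence, (a_n)_{n∈ℕ} a real sequence, fix E ∈ ℝ and ε₀ > 0, and let n₀ be an index with |E_{n₀} − E| minimal. If ∑_n |a_n| · exp(−(E_n−E)²/(2ε₀²)) converges, then the series of functions ε ↦ a_n · exp(−(E_n−E)²/(2ε²)) / (∑_{n'} exp(−(E_{n'}−E)²/(2ε²))) converges uniformly on the interval (0, ε₀] (i.e. the partial sums converge uniformly on (0, ε₀] to the pointwise sum). -/

import Mathlib

open Real Filter

/-- Uniform convergence on `(0, ε₀]` of the series defining the
Gaussian-ensemble expectation value. -/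
theorem gaussian_expectation_series_tendstoUniformlyOn
    (En a : ℕ → ℝ) (E ε₀ : ℝ) (hε₀ : 0 < ε₀)
    (n₀ : ℕ) (hn₀ : ∀ n, |En n₀ - E| ≤ |En n - E|)
    (h : Summable fun n => |a n| * Real.exp (-(En n - E) ^ 2 / (2 * ε₀ ^ 2))) :
    TendstoUniformlyOn
      (fun N : ℕ => fun ε : ℝ =>
        ∑ n ∈ Finset.range N,
          a n * Real.exp (-(En n - E) ^ 2 / (2 * ε ^ 2)) /
            (∑' n', Real.exp (-(En n' - E) ^ 2 / (2 * ε ^ 2))))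
      (fun ε : ℝ =>
        ∑' n,
          a n * Real.exp (-(En n - E) ^ 2 / (2 * ε ^ 2)) /
            (∑' n', Real.exp (-(En n' - E) ^ 2 / (2 * ε ^ 2))))
      atTop (Set.Ioc 0 ε₀) := by
  set C := Real.exp ((En n₀ - E) ^ 2 / (2 * ε₀ ^ 2)) with hC
  apply tendstoUniformlyOn_tsum_nat (u := fun n =>
    C * (|a n| * Real.exp (-(En n - E) ^ 2 / (2 * ε₀ ^ 2)))) (h.mul_left C)
  intro n ε hε
  obtain ⟨hε0, hεε₀⟩ := hε
  by_cases hs : Summable fun n' => Real.exp (-(En n' - E) ^ 2 / (2 * ε ^ 2))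
  · set S := ∑' n', Real.exp (-(En n' - E) ^ 2 / (2 * ε ^ 2)) with hS
    have hT : Real.exp (-(En n₀ - E) ^ 2 / (2 * ε ^ 2)) ≤ S :=
      Summable.le_tsum hs n₀ (fun j _ => (Real.exp_pos _).le)
    have hTpos : (0:ℝ) < Real.exp (-(En n₀ - E) ^ 2 / (2 * ε ^ 2)) := Real.exp_pos _
    have hSpos : 0 < S := lt_of_lt_of_le hTpos hT
    rw [Real.norm_eq_abs, abs_div, abs_of_pos hSpos, abs_mul,
      abs_of_pos (Real.exp_pos _)]
    have step1 : |a n| * Real.exp (-(En n - E) ^ 2 / (2 * ε ^ 2)) / S ≤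
        |a n| * Real.exp (-(En n - E) ^ 2 / (2 * ε ^ 2)) /
          Real.exp (-(En n₀ - E) ^ 2 / (2 * ε ^ 2)) := by
      apply div_le_div_of_nonneg_left _ hTpos hT
      positivity
    refine step1.trans ?_
    rw [mul_div_assoc, ← Real.exp_sub]
    rw [hC, mul_comm C, mul_assoc]
    gcongr
    rw [← Real.exp_add]
    apply Real.exp_le_exp.mpr
    have hd : (En n₀ - E) ^ 2 ≤ (En n - E) ^ 2 := by
      have := hn₀ n
      nlinarith [abs_nonneg (En n₀ - E), sq_abs (En n₀ - E), sq_abs (En n - E)]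
    have hεsq : ε ^ 2 ≤ ε₀ ^ 2 := by nlinarith
    rw [← sub_div, ← add_div, div_le_div_iff₀ (by positivity) (by positivity)]
    nlinarith [sq_nonneg ε, sq_nonneg ε₀, mul_pos (mul_pos hε0 hε0) (mul_pos hε₀ hε₀)]
  · rw [tsum_eq_zero_of_not_summable hs, div_zero, norm_zero]
    positivity
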